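/- Let μ be the Bernoulli measure on X^ℕ defined by a positive probability vector l, and let g : X^ℕ → X^ℕ be an invertible transformation generated by a strongly connected Mealy automaton A = (X, S, π, λ). Then the measures μ and g_*μ are mutually singular unless l_{λ(s,x)} = l_x for all s ∈ S and x ∈ X, in which case g_*μ = μ. -/

import Mathlib

open MeasureTheory Filter Topology
open scoped ENNReal

namespace AutoMarkov

variable {X : Type*} {S : Type*}

/-- The cylinder set of sequences starting with the finite word `w`. -/
def cylinder (w : List X) : Set (ℕ → X) :=
  {ω | ∀ i : Fin w.length, ω i = w.get i}

/-- Product of transition probabilities `L x y₁ * L y₁ y₂ * ⋯` along a word. -/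
noncomputable def chainWeight (L : X → X → ℝ≥0∞) : X → List X → ℝ≥0∞
  | _, [] => 1
  | x, y :: v => L x y * chainWeight L y v

/-- The Markov weight `l_{x₁} L_{x₁x₂} ⋯ L_{x_{n-1}x_n}` of a finite word. -/
noncomputable def cylWeight (l : X → ℝ≥0∞) (L : X → X → ℝ≥0∞) : List X → ℝ≥0∞
  | [] => 1
  | x :: v => l x * chainWeight L x v

/-- The one-sided shift on sequences. -/
def shift : (ℕ → X) → ℕ → X := fun ω n => ω (n + 1)

/-- Extension of the transition function of a Mealy automaton to finite words. -/
def piExt (πf : S → X → S) : S → List X → S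
  | s, [] => s
  | s, x :: w => piExt πf (πf s x) w

/-- Extension of the output function of a Mealy automaton to finite words. -/
def lamExt (πf : S → X → S) (lam : S → X → X) : S → List X → List X
  | _, [] => []
  | s, x :: w => lam s x :: lamExt πf lam (πf s x) w

/-- The action of the state `g` of a Mealy automaton on infinite sequences. -/
def autAct (πf : S → X → S) (lam : S → X → X) (g : S) : (ℕ → X) → ℕ → X :=
  fun ω n => lam (piExt πf g (List.ofFn fun i : Fin n => ω i)) (ω n)

/-- The matrix `T = T_{L,A}` on `S × X`. -/
noncomputable def Tmat [DecidableEq S] (πf : S → X → S) (L : X → X → ℝ≥0∞) :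
    S × X → S × X → ℝ≥0∞ :=
  fun p q => if πf p.1 p.2 = q.1 then L p.2 q.2 else 0

/-- The matrix `K = K_{l,A}` on `S`. -/
noncomputable def Kmat [Fintype X] [DecidableEq S] (πf : S → X → S) (l : X → ℝ≥0∞) :
    S → S → ℝ≥0∞ :=
  fun s₀ s₁ => ∑ x : X, if πf s₀ x = s₁ then l x else 0

/-- The automaton is strongly connected: any state is reachable from any state. -/
def StronglyConnected (πf : S → X → S) : Prop :=
  ∀ s r : S, ∃ w : List X, piExt πf s w = r

/-- The automaton is `L`-strongly connected. -/
def LStronglyConnected (πf : S → X → S) (L : X → X → ℝ≥0∞) : Prop :=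
  ∀ s r : S, ∀ x y : X, ∃ w : List X,
    piExt πf s (x :: w) = r ∧ chainWeight L x (w ++ [y]) ≠ 0

/-- Irreducibility of a stochastic matrix: positive-probability path between any
two symbols. -/
def IrreducibleMat (L : X → X → ℝ≥0∞) : Prop :=
  ∀ x y : X, ∃ v : List X, chainWeight L x (v ++ [y]) ≠ 0

/-- The automaton is reversible: every state has a unique `x`-predecessor. -/
def Reversible (πf : S → X → S) : Prop :=
  ∀ (s : S) (x : X), ∃! s₀ : S, πf s₀ x = s

section Automata

variable (πf : S → X → S) (lam : S → X → X)

@[simp] lemma piExt_nil (s : S) : piExt πf s [] = s := rfl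
@[simp] lemma piExt_cons (s : S) (x : X) (w : List X) :
    piExt πf s (x :: w) = piExt πf (πf s x) w := rfl
@[simp] lemma lamExt_nil (s : S) : lamExt πf lam s [] = [] := rfl
@[simp] lemma lamExt_cons (s : S) (x : X) (w : List X) :
    lamExt πf lam s (x :: w) = lam s x :: lamExt πf lam (πf s x) w := rfl

lemma piExt_append (s : S) (u v : List X) :
    piExt πf s (u ++ v) = piExt πf (piExt πf s u) v := by
  induction u generalizing s with
  | nil => rfl
  | cons x u ih => simp [ih]

@[simp] lemma lamExt_length (s : S) (w : List X) :
    (lamExt πf lam s w).length = w.length := by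
  induction w generalizing s with
  | nil => rfl
  | cons x w ih => simp [ih]

lemma lamExt_append (s : S) (u v : List X) :
    lamExt πf lam s (u ++ v) = lamExt πf lam s u ++ lamExt πf lam (piExt πf s u) v := by
  induction u generalizing s with
  | nil => rfl
  | cons x u ih => simp [ih]

lemma autAct_zero (g : S) (ω : ℕ → X) : autAct πf lam g ω 0 = lam g (ω 0) := rfl

lemma autAct_succ (g : S) (ω : ℕ → X) (n : ℕ) :
    autAct πf lam g ω (n + 1) = autAct πf lam (πf g (ω 0)) (shift ω) n := by
  simp only [autAct, shift, List.ofFn_succ, piExt_cons]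
  rfl

lemma lamExt_ofFn (g : S) (ω : ℕ → X) (n : ℕ) :
    lamExt πf lam g (List.ofFn fun i : Fin n => ω i) =
      List.ofFn (fun i : Fin n => autAct πf lam g ω i) := by
  induction n generalizing g ω with
  | zero => simp
  | succ n ih =>
      rw [List.ofFn_succ, List.ofFn_succ (f := fun i : Fin (n+1) => autAct πf lam g ω i)]
      simp only [lamExt_cons]
      congr 1
      have : (fun i : Fin n => ω i.succ) = fun i : Fin n => shift ω i := by
        funext i; simp [shift, Fin.val_succ]
      rw [this, ih]
      congr 1
      funext i
      rw [Fin.val_succ, autAct_succ]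
      norm_num

end Automata



section Bij

variable (πf : S → X → S) (lam : S → X → X) (g : S)

lemma lamExt_surj_len (x₀ : X) (hsurj : Function.Surjective (autAct πf lam g)) (w : List X) :
    ∃ u : List X, u.length = w.length ∧ lamExt πf lam g u = w := by
  obtain ⟨ω, hω⟩ := hsurj (fun i => w.getD i x₀)
  refine ⟨List.ofFn fun i : Fin w.length => ω i, by simp, ?_⟩
  rw [lamExt_ofFn]
  have h1 : (fun i : Fin w.length => autAct πf lam g ω i) = fun i : Fin w.length => w.get i := by
    funext i
    rw [congrFun hω i]
    simp [List.getD_eq_getElem, List.get_eq_getElem]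
  rw [h1, List.ofFn_get]

lemma lam_surj_aux (n : ℕ)
    (hinjn : ∀ u u' : List X, u.length = n → u'.length = n →
      lamExt πf lam g u = lamExt πf lam g u' → u = u')
    (x₀ : X) (hsurj : Function.Surjective (autAct πf lam g))
    (u₀ : List X) (h₀ : u₀.length = n) : Function.Surjective (lam (piExt πf g u₀)) := by
  intro y
  obtain ⟨u, hu, hΨ⟩ := lamExt_surj_len πf lam g x₀ hsurj (lamExt πf lam g u₀ ++ [y])
  have hu' : u.length = n + 1 := by simpa [h₀] using hu
  rcases List.eq_nil_or_concat u with rfl | ⟨d, a, rfl⟩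
  · simp at hu'
  rw [List.concat_eq_append] at hΨ hu'
  rw [lamExt_append] at hΨ
  have hdl : d.length = n := by simpa using hu'
  have hlen : (lamExt πf lam g d).length = (lamExt πf lam g u₀).length := by
    simp [hdl, h₀]
  obtain ⟨h1, h2⟩ := List.append_inj hΨ hlen
  have hd : d = u₀ := hinjn d u₀ hdl h₀ h1
  simp only [lamExt_cons, lamExt_nil] at h2
  refine ⟨a, ?_⟩
  rw [← hd]
  exact (List.cons.injEq _ _ _ _ ▸ h2).1

lemma lamExt_inj [Finite X] (x₀ : X) (hsurj : Function.Surjective (autAct πf lam g)) :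
    ∀ n, ∀ u u' : List X, u.length = n → u'.length = n →
      lamExt πf lam g u = lamExt πf lam g u' → u = u' := by
  intro n
  induction n with
  | zero =>
      intro u u' h h' _
      rw [List.length_eq_zero_iff] at h h'
      rw [h, h']
  | succ n ih =>
      intro u u' h h' hΨ
      rcases List.eq_nil_or_concat u with rfl | ⟨d, a, rfl⟩
      · simp at h
      rcases List.eq_nil_or_concat u' with rfl | ⟨d', a', rfl⟩
      · simp at h'
      simp only [List.concat_eq_append] at hΨ h h' ⊢
      have hdl : d.length = n := by simpa using h
      have hdl' : d'.length = n := by simpa using h'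
      rw [lamExt_append, lamExt_append] at hΨ
      obtain ⟨h1, h2⟩ := List.append_inj hΨ (by simp [hdl, hdl'])
      have hd : d = d' := ih d d' hdl hdl' h1
      subst hd
      simp only [lamExt_cons, lamExt_nil] at h2
      have ha : lam (piExt πf g d) a = lam (piExt πf g d) a' :=
        (List.cons.injEq _ _ _ _ ▸ h2).1
      have hinj : Function.Injective (lam (piExt πf g d)) :=
        Finite.injective_iff_surjective.mpr (lam_surj_aux πf lam g n ih x₀ hsurj d hdl)
      rw [hinj ha]

lemma lam_bij [Finite X] (x₀ : X) (hconn : StronglyConnected πf)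
    (hsurj : Function.Surjective (autAct πf lam g)) (s : S) :
    Function.Bijective (lam s) := by
  obtain ⟨w, rfl⟩ := hconn g s
  have hs : Function.Surjective (lam (piExt πf g w)) :=
    lam_surj_aux πf lam g w.length (lamExt_inj πf lam g x₀ hsurj w.length) x₀ hsurj w rfl
  exact ⟨Finite.injective_iff_surjective.mpr hs, hs⟩

end Bij



section Cyl

variable [MeasurableSpace X] [MeasurableSingletonClass X]

lemma mem_cylinder_ofFn {n : ℕ} (v : Fin n → X) (ω : ℕ → X) :
    ω ∈ cylinder (List.ofFn v) ↔ ∀ i : Fin n, ω i = v i := by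
  constructor
  · intro h i
    have := h (Fin.cast (by simp) i)
    simpa using this
  · intro h i
    have := h (Fin.cast (by simp) i)
    simp at this ⊢
    exact this

lemma measurableSet_cylinder (w : List X) : MeasurableSet (cylinder w) := by
  have : cylinder w = ⋂ i : Fin w.length, (fun ω : ℕ → X => ω i) ⁻¹' {w.get i} := by
    ext ω; simp [cylinder, Set.mem_iInter]
  rw [this]
  exact MeasurableSet.iInter fun i => (measurable_pi_apply _) (measurableSet_singleton _)

lemma cylinder_nil_eq_univ : cylinder ([] : List X) = Set.univ := by
  ext ω
  simp [cylinder]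

lemma cylinder_ofFn_disjoint {n : ℕ} {v v' : Fin n → X} (h : v ≠ v') :
    Disjoint (cylinder (List.ofFn v)) (cylinder (List.ofFn v')) := by
  rw [Set.disjoint_left]
  intro ω h1 h2
  apply h
  funext i
  rw [← (mem_cylinder_ofFn v ω).mp h1 i, (mem_cylinder_ofFn v' ω).mp h2 i]

lemma mem_cylinder_restrict {n : ℕ} (ω : ℕ → X) :
    ω ∈ cylinder (List.ofFn fun i : Fin n => ω i) :=
  (mem_cylinder_ofFn _ ω).mpr fun _ => rfl

lemma measure_cylinder_ofFn (l : X → ℝ≥0∞) (μ : Measure (ℕ → X))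
    (hμ : ∀ w : List X, μ (cylinder w) = (w.map l).prod) {n : ℕ} (v : Fin n → X) :
    μ (cylinder (List.ofFn v)) = ∏ i : Fin n, l (v i) := by
  rw [hμ, List.map_ofFn, List.prod_ofFn]
  rfl

lemma measure_biUnion_cylinders (μ : Measure (ℕ → X)) {n : ℕ} (F : Finset (Fin n → X)) :
    μ (⋃ v ∈ F, cylinder (List.ofFn v)) = ∑ v ∈ F, μ (cylinder (List.ofFn v)) := by
  refine measure_biUnion_finset ?_ fun v _ => measurableSet_cylinder _
  intro v _ v' _ hne
  exact cylinder_ofFn_disjoint hne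

end Cyl

section Equivv

variable (πf : S → X → S) (lam : S → X → X) (g : S)

lemma exists_wordEquiv [Finite X] (x₀ : X)
    (hinv : Function.Bijective (autAct πf lam g)) (n : ℕ) :
    ∃ e : (Fin n → X) ≃ (Fin n → X),
      ∀ v, List.ofFn (e v) = lamExt πf lam g (List.ofFn v) := by
  classical
  set Φ : (Fin n → X) → (Fin n → X) :=
    fun v i => (lamExt πf lam g (List.ofFn v)).get (Fin.cast (by simp) i) with hΦ
  have hofn : ∀ v, List.ofFn (Φ v) = lamExt πf lam g (List.ofFn v) := by
    intro v
    apply List.ext_getElem (by simp)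
    intro i h1 h2
    simp [hΦ]
  have hinj : Function.Injective Φ := by
    intro v v' h
    have h2 : lamExt πf lam g (List.ofFn v) = lamExt πf lam g (List.ofFn v') := by
      rw [← hofn, ← hofn, h]
    have := lamExt_inj πf lam g x₀ hinv.2 n (List.ofFn v) (List.ofFn v')
      (by simp) (by simp) h2
    exact List.ofFn_injective this
  have hsurj : Function.Surjective Φ := by
    intro w
    obtain ⟨u, hu, hΨ⟩ := lamExt_surj_len πf lam g x₀ hinv.2 (List.ofFn w)
    rw [List.length_ofFn] at hu
    refine ⟨fun i => u.get (Fin.cast hu.symm i), ?_⟩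
    have hofu : List.ofFn (fun i : Fin n => u.get (Fin.cast hu.symm i)) = u := by
      apply List.ext_getElem (by simp [hu])
      intro i h1 h2
      simp
    apply List.ofFn_injective
    rw [hofn, hofu, hΨ]
  exact ⟨Equiv.ofBijective Φ ⟨hinj, hsurj⟩, hofn⟩

lemma autAct_restr {n : ℕ} (e : (Fin n → X) ≃ (Fin n → X))
    (he : ∀ v, List.ofFn (e v) = lamExt πf lam g (List.ofFn v)) (ω : ℕ → X) (i : Fin n) :
    autAct πf lam g ω i = e (fun j : Fin n => ω j) i := by
  have h1 : List.ofFn (fun i : Fin n => autAct πf lam g ω i) =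
      List.ofFn (e fun j : Fin n => ω j) := by
    rw [he, lamExt_ofFn]
  have := List.ofFn_injective h1
  exact congrFun this i

lemma preimage_cylinder_ofFn [MeasurableSpace X] [MeasurableSingletonClass X] {n : ℕ}
    (e : (Fin n → X) ≃ (Fin n → X))
    (he : ∀ v, List.ofFn (e v) = lamExt πf lam g (List.ofFn v)) (w : Fin n → X) :
    (autAct πf lam g) ⁻¹' (cylinder (List.ofFn w)) = cylinder (List.ofFn (e.symm w)) := by
  ext ω
  simp only [Set.mem_preimage, mem_cylinder_ofFn]
  constructor
  · intro h i
    have hew : e (fun j : Fin n => ω j) = w := by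
      funext i
      rw [← autAct_restr πf lam g e he ω i]
      exact h i
    have : (fun j : Fin n => ω j) = e.symm w := by rw [← hew, Equiv.symm_apply_apply]
    exact congrFun this i
  · intro h i
    have hv : (fun j : Fin n => ω j) = e.symm w := funext h
    rw [autAct_restr πf lam g e he ω i, hv, Equiv.apply_symm_apply]

end Equivv



section Ext

variable [Fintype X] [MeasurableSpace X] [MeasurableSingletonClass X]

lemma measures_eq_of_cylinders (x₀ : X) (μ ν : Measure (ℕ → X)) [IsFiniteMeasure μ]
    (h : ∀ (n : ℕ) (v : Fin n → X), μ (cylinder (List.ofFn v)) = ν (cylinder (List.ofFn v)))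
    (huniv : μ Set.univ = ν Set.univ) : μ = ν := by
  classical
  refine ext_of_generate_finite (measurableCylinders fun _ : ℕ => X)
    generateFrom_measurableCylinders.symm isPiSystem_measurableCylinders ?_ huniv
  intro t ht
  obtain ⟨s, St, hSt, rfl⟩ := (mem_measurableCylinders t).mp ht
  set n := s.sup id + 1 with hn
  have hsn : ∀ i ∈ s, i < n := fun i hi => Nat.lt_succ_of_le (Finset.le_sup (f := id) hi)
  set ex : (Fin n → X) → ℕ → X := fun v j => if h : j < n then v ⟨j, h⟩ else x₀ with hex
  set F : Finset (Fin n → X) :=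
    Finset.univ.filter (fun v => ex v ∈ MeasureTheory.cylinder s St) with hF
  have hagree : ∀ (ω : ℕ → X) (v : Fin n → X), (∀ i : Fin n, ω i = v i) →
      (ω ∈ MeasureTheory.cylinder s St ↔ ex v ∈ MeasureTheory.cylinder s St) := by
    intro ω v hv
    rw [mem_cylinder, mem_cylinder]
    have : s.restrict ω = s.restrict (ex v) := by
      funext i
      have hi : (i : ℕ) < n := hsn i i.2
      simp only [Finset.restrict_def, hex]
      rw [dif_pos hi, ← hv ⟨i, hi⟩]
    rw [this]
  have hdet : MeasureTheory.cylinder s St = ⋃ v ∈ F, cylinder (List.ofFn v) := by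
    ext ω
    constructor
    · intro hω
      refine Set.mem_iUnion₂.mpr ⟨fun i : Fin n => ω i, ?_, mem_cylinder_restrict ω⟩
      rw [hF, Finset.mem_filter]
      exact ⟨Finset.mem_univ _,
        (hagree ω (fun i : Fin n => ω i) (fun _ => rfl)).mp hω⟩
    · intro hω
      obtain ⟨v, hvF, hωv⟩ := Set.mem_iUnion₂.mp hω
      rw [hF, Finset.mem_filter] at hvF
      exact (hagree ω v ((mem_cylinder_ofFn v ω).mp hωv)).mpr hvF.2
  rw [hdet, measure_biUnion_cylinders, measure_biUnion_cylinders]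
  exact Finset.sum_congr rfl fun v _ => h n v

end Ext



section Decay

variable [Fintype X] [Fintype S]

/-- auxiliary real weight recursion -/
noncomputable def rr (πf : S → X → S) (lam : S → X → X) (p : X → ℝ) : ℕ → S → ℝ
  | 0, _ => 1
  | n+1, s => ∑ x : X, Real.sqrt (p x * p (lam s x)) * rr πf lam p n (πf s x)

/-- auxiliary real word weight -/
noncomputable def Wt (πf : S → X → S) (lam : S → X → X) (p : X → ℝ) : S → List X → ℝ
  | _, [] => 1
  | s, x :: u => Real.sqrt (p x * p (lam s x)) * Wt πf lam p (πf s x) u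

variable (πf : S → X → S) (lam : S → X → X) (p : X → ℝ)

@[simp] lemma rr_zero (s : S) : rr πf lam p 0 s = 1 := rfl
lemma rr_succ (n : ℕ) (s : S) :
    rr πf lam p (n + 1) s = ∑ x : X, Real.sqrt (p x * p (lam s x)) * rr πf lam p n (πf s x) := rfl
@[simp] lemma Wt_nil (s : S) : Wt πf lam p s [] = 1 := rfl
lemma Wt_cons (s : S) (x : X) (u : List X) :
    Wt πf lam p s (x :: u) = Real.sqrt (p x * p (lam s x)) * Wt πf lam p (πf s x) u := rfl

lemma sqrt_amgm {a b : ℝ} (ha : 0 ≤ a) (hb : 0 ≤ b) : Real.sqrt (a * b) ≤ (a + b) / 2 := by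
  rw [Real.sqrt_mul ha]
  nlinarith [Real.sq_sqrt ha, Real.sq_sqrt hb, sq_nonneg (Real.sqrt a - Real.sqrt b),
    Real.sqrt_nonneg a, Real.sqrt_nonneg b]

lemma sqrt_amgm_lt {a b : ℝ} (ha : 0 ≤ a) (hb : 0 ≤ b) (hne : a ≠ b) :
    Real.sqrt (a * b) < (a + b) / 2 := by
  have h1 : Real.sqrt a - Real.sqrt b ≠ 0 := by
    intro h
    exact hne ((Real.sqrt_inj ha hb).mp (by linarith [sub_eq_zero.mp h]))
  have h2 : 0 < (Real.sqrt a - Real.sqrt b) ^ 2 := by positivity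
  rw [Real.sqrt_mul ha]
  nlinarith [Real.sq_sqrt ha, Real.sq_sqrt hb, Real.sqrt_nonneg a, Real.sqrt_nonneg b]

lemma q_sum (hp1 : ∑ x : X, p x = 1) (hlam : ∀ s, Function.Bijective (lam s)) (s : S) :
    ∑ x : X, p (lam s x) = 1 := by
  rw [Fintype.sum_bijective (lam s) (hlam s) _ _ (fun x => rfl)]
  exact hp1

lemma delta_le_one (hp : ∀ x, 0 < p x) (hp1 : ∑ x : X, p x = 1)
    (hlam : ∀ s, Function.Bijective (lam s)) (s : S) :
    ∑ x : X, Real.sqrt (p x * p (lam s x)) ≤ 1 := by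
  calc ∑ x : X, Real.sqrt (p x * p (lam s x)) ≤ ∑ x : X, (p x + p (lam s x)) / 2 :=
        Finset.sum_le_sum fun x _ => sqrt_amgm (hp x).le (hp _).le
    _ = 1 := by
        rw [← Finset.sum_div, Finset.sum_add_distrib, hp1, q_sum lam p hp1 hlam s]
        norm_num

lemma delta_lt_one (hp : ∀ x, 0 < p x) (hp1 : ∑ x : X, p x = 1)
    (hlam : ∀ s, Function.Bijective (lam s)) (s₀ : S) (x₀ : X)
    (hne : p (lam s₀ x₀) ≠ p x₀) :
    ∑ x : X, Real.sqrt (p x * p (lam s₀ x)) < 1 := by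
  have hlt : ∑ x : X, Real.sqrt (p x * p (lam s₀ x)) < ∑ x : X, (p x + p (lam s₀ x)) / 2 :=
    Finset.sum_lt_sum (fun x _ => sqrt_amgm (hp x).le (hp _).le)
      ⟨x₀, Finset.mem_univ _, sqrt_amgm_lt (hp x₀).le (hp _).le (Ne.symm hne)⟩
  calc ∑ x : X, Real.sqrt (p x * p (lam s₀ x)) < ∑ x : X, (p x + p (lam s₀ x)) / 2 := hlt
    _ = 1 := by
        rw [← Finset.sum_div, Finset.sum_add_distrib, hp1, q_sum lam p hp1 hlam s₀]
        norm_num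

lemma Wt_nonneg (s : S) (u : List X) : 0 ≤ Wt πf lam p s u := by
  induction u generalizing s with
  | nil => norm_num
  | cons x u ih => exact mul_nonneg (Real.sqrt_nonneg _) (ih _)

lemma Wt_pos (hp : ∀ x, 0 < p x) (s : S) (u : List X) : 0 < Wt πf lam p s u := by
  induction u generalizing s with
  | nil => norm_num
  | cons x u ih => exact mul_pos (Real.sqrt_pos.mpr (mul_pos (hp _) (hp _))) (ih _)

lemma rr_split (n m : ℕ) (s : S) :
    rr πf lam p (n + m) s =
      ∑ v : Fin n → X,
        Wt πf lam p s (List.ofFn v) * rr πf lam p m (piExt πf s (List.ofFn v)) := by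
  induction n generalizing s with
  | zero =>
      simp only [Nat.zero_add, List.ofFn_zero, Wt_nil, piExt_nil, one_mul]
      rw [Finset.sum_const, Finset.card_univ]
      have : Fintype.card (Fin 0 → X) = 1 := by simp
      rw [this, one_smul]
  | succ n ih =>
      rw [Nat.succ_add, rr_succ]
      rw [← Fintype.sum_equiv (Fin.consEquiv (fun _ : Fin (n + 1) => X))
        (fun P : X × (Fin n → X) => Wt πf lam p s (List.ofFn (Fin.cons P.1 P.2)) *
          rr πf lam p m (piExt πf s (List.ofFn (Fin.cons P.1 P.2))))
        (fun v : Fin (n + 1) → X =>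
          Wt πf lam p s (List.ofFn v) * rr πf lam p m (piExt πf s (List.ofFn v)))
        (fun P => rfl)]
      rw [Fintype.sum_prod_type]
      refine Finset.sum_congr rfl fun x _ => ?_
      rw [ih (πf s x), Finset.mul_sum]
      refine Finset.sum_congr rfl fun v _ => ?_
      have hcons : List.ofFn (Fin.cons x v : Fin (n + 1) → X) = x :: List.ofFn v := by
        simp [List.ofFn_succ]
      rw [hcons, Wt_cons, piExt_cons, mul_assoc]

lemma rr_nonneg (n : ℕ) (s : S) : 0 ≤ rr πf lam p n s := by
  induction n generalizing s with
  | zero => norm_num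
  | succ n ih => exact Finset.sum_nonneg fun x _ => mul_nonneg (Real.sqrt_nonneg _) (ih _)

lemma rr_le_one (hp : ∀ x, 0 < p x) (hp1 : ∑ x : X, p x = 1)
    (hlam : ∀ s, Function.Bijective (lam s)) (n : ℕ) (s : S) : rr πf lam p n s ≤ 1 := by
  induction n generalizing s with
  | zero => exact le_refl 1
  | succ n ih =>
      rw [rr_succ]
      calc ∑ x : X, Real.sqrt (p x * p (lam s x)) * rr πf lam p n (πf s x)
          ≤ ∑ x : X, Real.sqrt (p x * p (lam s x)) * 1 :=
            Finset.sum_le_sum fun x _ =>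
              mul_le_mul_of_nonneg_left (ih _) (Real.sqrt_nonneg _)
        _ = ∑ x : X, Real.sqrt (p x * p (lam s x)) := by simp
        _ ≤ 1 := delta_le_one lam p hp hp1 hlam s

lemma rr_succ_le (hp : ∀ x, 0 < p x) (hp1 : ∑ x : X, p x = 1)
    (hlam : ∀ s, Function.Bijective (lam s)) (n : ℕ) (s : S) :
    rr πf lam p (n + 1) s ≤ rr πf lam p n s := by
  induction n generalizing s with
  | zero =>
      have := rr_le_one πf lam p hp hp1 hlam 1 s
      simpa using this
  | succ n ih =>
      rw [rr_succ, rr_succ]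
      exact Finset.sum_le_sum fun x _ =>
        mul_le_mul_of_nonneg_left (ih _) (Real.sqrt_nonneg _)

lemma rr_anti (hp : ∀ x, 0 < p x) (hp1 : ∑ x : X, p x = 1)
    (hlam : ∀ s, Function.Bijective (lam s)) (s : S) {m n : ℕ} (h : m ≤ n) :
    rr πf lam p n s ≤ rr πf lam p m s := by
  induction n, h using Nat.le_induction with
  | base => exact le_refl _
  | succ n hmn ih => exact le_trans (rr_succ_le πf lam p hp hp1 hlam n s) ih

lemma sum_Wt (n : ℕ) (s : S) :
    ∑ v : Fin n → X, Wt πf lam p s (List.ofFn v) = rr πf lam p n s := by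
  have := rr_split πf lam p n 0 s
  simp only [Nat.add_zero, rr_zero, mul_one] at this
  rw [this]

lemma Wt_le_one (hp : ∀ x, 0 < p x) (hp1 : ∑ x : X, p x = 1)
    (hlam : ∀ s, Function.Bijective (lam s)) (s : S) (u : List X) :
    Wt πf lam p s u ≤ 1 := by
  classical
  set v₀ : Fin u.length → X := u.get with hv₀
  have hofn : List.ofFn v₀ = u := List.ofFn_get u
  calc Wt πf lam p s u = Wt πf lam p s (List.ofFn v₀) := by rw [hofn]
    _ ≤ ∑ v : Fin u.length → X, Wt πf lam p s (List.ofFn v) :=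
        Finset.single_le_sum (fun v _ => Wt_nonneg πf lam p s _) (Finset.mem_univ v₀)
    _ = rr πf lam p u.length s := sum_Wt πf lam p _ s
    _ ≤ 1 := rr_le_one πf lam p hp hp1 hlam _ s

lemma rr_step_bound (hp : ∀ x, 0 < p x) (hp1 : ∑ x : X, p x = 1)
    (hlam : ∀ s, Function.Bijective (lam s)) (s₀ : S) (s : S) (w : List X)
    (hw : piExt πf s w = s₀) :
    rr πf lam p (w.length + 1) s ≤
      1 - (1 - ∑ x : X, Real.sqrt (p x * p (lam s₀ x))) * Wt πf lam p s w := by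
  classical
  set δ₀ := ∑ x : X, Real.sqrt (p x * p (lam s₀ x)) with hδ₀
  set n := w.length with hn
  set v₀ : Fin n → X := w.get with hv₀def
  have hr1 : ∀ t : S, rr πf lam p 1 t = ∑ x : X, Real.sqrt (p x * p (lam t x)) := by
    intro t
    rw [rr_succ]
    simp
  have hofn : List.ofFn v₀ = w := List.ofFn_get w
  have hsplit := rr_split πf lam p n 1 s
  rw [hsplit, ← Finset.add_sum_erase _ _ (Finset.mem_univ v₀)]
  have h1 : Wt πf lam p s (List.ofFn v₀) * rr πf lam p 1 (piExt πf s (List.ofFn v₀)) =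
      Wt πf lam p s w * δ₀ := by
    rw [hofn, hw, hr1]
  have h2 : ∑ v ∈ Finset.univ.erase v₀,
      Wt πf lam p s (List.ofFn v) * rr πf lam p 1 (piExt πf s (List.ofFn v)) ≤
      ∑ v ∈ Finset.univ.erase v₀, Wt πf lam p s (List.ofFn v) := by
    refine Finset.sum_le_sum fun v _ => ?_
    calc Wt πf lam p s (List.ofFn v) * rr πf lam p 1 (piExt πf s (List.ofFn v))
        ≤ Wt πf lam p s (List.ofFn v) * 1 :=
          mul_le_mul_of_nonneg_left (rr_le_one πf lam p hp hp1 hlam 1 _)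
            (Wt_nonneg πf lam p s _)
      _ = Wt πf lam p s (List.ofFn v) := mul_one _
  have h3 : ∑ v ∈ Finset.univ.erase v₀, Wt πf lam p s (List.ofFn v) =
      rr πf lam p n s - Wt πf lam p s w := by
    rw [Finset.sum_erase_eq_sub (Finset.mem_univ v₀), sum_Wt, hofn]
  have h4 : rr πf lam p n s ≤ 1 := rr_le_one πf lam p hp hp1 hlam n s
  have h5 : 0 ≤ Wt πf lam p s w := Wt_nonneg πf lam p s w
  have h6 : 0 ≤ δ₀ := Finset.sum_nonneg fun x _ => Real.sqrt_nonneg _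
  rw [h1]
  rw [h3] at h2
  linarith

lemma rr_decay (N : ℕ) (c : ℝ) (hc0 : 0 ≤ c)
    (hN : ∀ s : S, rr πf lam p N s ≤ c) (k : ℕ) (s : S) :
    rr πf lam p (k * N) s ≤ c ^ k := by
  induction k generalizing s with
  | zero => simp
  | succ k ih =>
      have hkn : (k + 1) * N = N + k * N := by ring
      rw [hkn, rr_split]
      calc ∑ v : Fin N → X,
            Wt πf lam p s (List.ofFn v) * rr πf lam p (k * N) (piExt πf s (List.ofFn v))
          ≤ ∑ v : Fin N → X, Wt πf lam p s (List.ofFn v) * c ^ k :=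
            Finset.sum_le_sum fun v _ =>
              mul_le_mul_of_nonneg_left (ih _) (Wt_nonneg πf lam p s _)
        _ = rr πf lam p N s * c ^ k := by rw [← Finset.sum_mul, sum_Wt]
        _ ≤ c * c ^ k := mul_le_mul_of_nonneg_right (hN s) (pow_nonneg hc0 k)
        _ = c ^ (k + 1) := by ring

lemma rr_uniform [Nonempty S] (hp : ∀ x, 0 < p x) (hp1 : ∑ x : X, p x = 1)
    (hlam : ∀ s, Function.Bijective (lam s)) (hconn : StronglyConnected πf)
    (s₀ : S) (x₀ : X) (hne : p (lam s₀ x₀) ≠ p x₀) :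
    ∃ (N : ℕ) (c : ℝ), 0 ≤ c ∧ c < 1 ∧ ∀ (k : ℕ) (s : S), rr πf lam p (k * N) s ≤ c ^ k := by
  classical
  set δ₀ := ∑ x : X, Real.sqrt (p x * p (lam s₀ x)) with hδ₀def
  have hδ₀1 : δ₀ < 1 := delta_lt_one lam p hp hp1 hlam s₀ x₀ hne
  have hδ₀0 : 0 ≤ δ₀ := Finset.sum_nonneg fun x _ => Real.sqrt_nonneg _
  choose w hw using fun s => hconn s s₀
  set N := (Finset.univ.sup fun s : S => (w s).length) + 1 with hN
  set m := Finset.univ.inf' Finset.univ_nonempty (fun s : S => Wt πf lam p s (w s)) with hm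
  have hm0 : 0 < m := by
    rw [hm, Finset.lt_inf'_iff]
    exact fun s _ => Wt_pos πf lam p hp s (w s)
  have hm1 : ∀ s, m ≤ Wt πf lam p s (w s) := fun s => Finset.inf'_le _ (Finset.mem_univ s)
  have hmle : m ≤ 1 := by
    obtain ⟨s⟩ := (inferInstance : Nonempty S)
    exact le_trans (hm1 s) (Wt_le_one πf lam p hp hp1 hlam s (w s))
  set c := 1 - (1 - δ₀) * m with hc
  have hc1 : c < 1 := by
    have : 0 < (1 - δ₀) * m := mul_pos (by linarith) hm0
    rw [hc]; linarith
  have hc0 : 0 ≤ c := by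
    have : (1 - δ₀) * m ≤ 1 * 1 :=
      mul_le_mul (by linarith) hmle hm0.le (by norm_num)
    rw [hc]; linarith
  refine ⟨N, c, hc0, hc1, ?_⟩
  refine rr_decay πf lam p N c hc0 (fun s => ?_)
  have hlen : (w s).length + 1 ≤ N := by
    rw [hN]
    exact Nat.succ_le_succ (Finset.le_sup (f := fun s => (w s).length) (Finset.mem_univ s))
  calc rr πf lam p N s ≤ rr πf lam p ((w s).length + 1) s :=
        rr_anti πf lam p hp hp1 hlam s hlen
    _ ≤ 1 - (1 - δ₀) * Wt πf lam p s (w s) :=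
        rr_step_bound πf lam p hp hp1 hlam s₀ s (w s) (hw s)
    _ ≤ c := by
        rw [hc]
        have h7 : (1 - δ₀) * m ≤ (1 - δ₀) * Wt πf lam p s (w s) :=
          mul_le_mul_of_nonneg_left (hm1 s) (by linarith)
        linarith

lemma Wt_eq_sqrt (hp : ∀ x, 0 ≤ p x) (s : S) (u : List X) :
    Wt πf lam p s u = Real.sqrt ((u.map p).prod * ((lamExt πf lam s u).map p).prod) := by
  induction u generalizing s with
  | nil => simp
  | cons x u ih =>
      rw [Wt_cons, ih (πf s x)]
      simp only [List.map_cons, List.prod_cons, lamExt_cons]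
      rw [← Real.sqrt_mul (mul_nonneg (hp x) (hp _))]
      congr 1
      ring

end Decay




theorem stmt17 [Fintype X] [Fintype S]
    [MeasurableSpace X] [MeasurableSingletonClass X]
    (l : X → ℝ≥0∞) (hl1 : ∑ x : X, l x = 1) (hlpos : ∀ x, 0 < l x)
    (μ : Measure (ℕ → X)) (hμ : ∀ w : List X, μ (cylinder w) = (w.map l).prod)
    (πf : S → X → S) (lam : S → X → X) (g : S)
    (hconn : StronglyConnected πf)
    (hinv : Function.Bijective (autAct πf lam g))
    (hmeas : Measurable (autAct πf lam g)) :
    (¬ (∀ (s : S) (x : X), l (lam s x) = l x) →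
      Measure.MutuallySingular μ (Measure.map (autAct πf lam g) μ)) ∧
    ((∀ (s : S) (x : X), l (lam s x) = l x) → Measure.map (autAct πf lam g) μ = μ) := by
  classical
  have hX : Nonempty X := by
    by_contra h
    rw [not_nonempty_iff] at h
    rw [Finset.univ_eq_empty, Finset.sum_empty] at hl1
    exact zero_ne_one hl1
  obtain ⟨x₀⟩ := hX
  set ν := Measure.map (autAct πf lam g) μ with hν
  have hμuniv : μ Set.univ = 1 := by
    rw [← cylinder_nil_eq_univ, hμ]
    simp
  have hltop : ∀ x, l x ≠ ⊤ := by
    intro x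
    have hle : l x ≤ 1 :=
      hl1 ▸ Finset.single_le_sum (f := l) (fun y _ => zero_le) (Finset.mem_univ x)
    exact (hle.trans_lt ENNReal.one_lt_top).ne
  choose e hee using exists_wordEquiv πf lam g x₀ hinv
  have hν_cyl : ∀ (n : ℕ) (w : Fin n → X),
      ν (cylinder (List.ofFn w)) = μ (cylinder (List.ofFn ((e n).symm w))) := by
    intro n w
    rw [hν, Measure.map_apply hmeas (measurableSet_cylinder _),
      preimage_cylinder_ofFn πf lam g (e n) (hee n) w]
  constructor
  · -- mutually singular case
    intro hnot
    push_neg at hnot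
    obtain ⟨s₀, y₀, hne⟩ := hnot
    set p : X → ℝ := fun x => (l x).toReal with hpdef
    have hp : ∀ x, 0 < p x := fun x => ENNReal.toReal_pos (hlpos x).ne' (hltop x)
    have hppos : ∀ x, 0 ≤ p x := fun x => (hp x).le
    have hp1 : ∑ x : X, p x = 1 := by
      rw [hpdef, ← ENNReal.toReal_sum (fun x _ => hltop x), hl1, ENNReal.toReal_one]
    have hlam : ∀ s, Function.Bijective (lam s) := lam_bij πf lam g x₀ hconn hinv.2
    have hpne : p (lam s₀ y₀) ≠ p y₀ := by
      intro h
      exact hne ((ENNReal.toReal_eq_toReal_iff' (hltop _) (hltop _)).mp h)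
    haveI : Nonempty S := ⟨g⟩
    obtain ⟨N, c, hc0, hc1, hdecay⟩ := rr_uniform πf lam p hp hp1 hlam hconn s₀ y₀ hpne
    have hprodtop : ∀ u : List X, ((u.map l).prod) ≠ ⊤ := by
      intro u
      induction u with
      | nil => simp
      | cons x u ih =>
          simp only [List.map_cons, List.prod_cons]
          exact ENNReal.mul_ne_top (hltop x) ih
    have hprodreal : ∀ u : List X, ((u.map l).prod).toReal = (u.map p).prod := by
      intro u
      induction u with
      | nil => simp
      | cons x u ih =>
          simp only [List.map_cons, List.prod_cons, ENNReal.toReal_mul, ih]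
          rfl
    have hμr : ∀ u : List X, μ (cylinder u) = ENNReal.ofReal ((u.map p).prod) := by
      intro u
      rw [hμ, ← hprodreal u, ENNReal.ofReal_toReal (hprodtop u)]
    have hprodnn : ∀ u : List X, 0 ≤ (u.map p).prod := by
      intro u
      induction u with
      | nil => norm_num
      | cons x u ih => simpa using mul_nonneg (hppos x) ih
    set A : ∀ n : ℕ, (Fin n → X) → ℝ := fun n v => ((List.ofFn v).map p).prod with hA
    set B : ∀ n : ℕ, (Fin n → X) → ℝ := fun n v =>
      ((List.ofFn ((e n).symm v)).map p).prod with hB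
    have hμv : ∀ (n : ℕ) (v : Fin n → X),
        μ (cylinder (List.ofFn v)) = ENNReal.ofReal (A n v) := fun n v => hμr _
    have hνv : ∀ (n : ℕ) (v : Fin n → X),
        ν (cylinder (List.ofFn v)) = ENNReal.ofReal (B n v) := by
      intro n v
      rw [hν_cyl n v]
      exact hμr _
    have hH : ∀ n : ℕ, ∑ v : Fin n → X, Real.sqrt (A n v * B n v) = rr πf lam p n g := by
      intro n
      rw [← Equiv.sum_comp (e n) (fun v => Real.sqrt (A n v * B n v)), ← sum_Wt πf lam p n g]
      refine Finset.sum_congr rfl fun u _ => ?_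
      have h1 : B n ((e n) u) = A n u := by
        rw [hB, hA]
        simp
      have h2 : A n ((e n) u) = ((lamExt πf lam g (List.ofFn u)).map p).prod := by
        rw [hA]
        simp only []
        rw [hee n u]
      rw [h1, h2, Wt_eq_sqrt πf lam p hppos g (List.ofFn u), mul_comm]
    set F : ∀ n : ℕ, Finset (Fin n → X) := fun n =>
      Finset.univ.filter
        (fun v => μ (cylinder (List.ofFn v)) ≤ ν (cylinder (List.ofFn v))) with hF
    set G : ℕ → Set (ℕ → X) := fun n => ⋃ v ∈ F n, cylinder (List.ofFn v) with hG
    have hGmeas : ∀ n, MeasurableSet (G n) := fun n =>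
      Set.Finite.measurableSet_biUnion (Finset.finite_toSet _)
        (fun v _ => measurableSet_cylinder _)
    have hμG : ∀ n, μ (G n) ≤ ENNReal.ofReal (rr πf lam p n g) := by
      intro n
      rw [hG]
      simp only []
      rw [measure_biUnion_cylinders]
      have hterm : ∀ v ∈ F n, μ (cylinder (List.ofFn v)) ≤
          ENNReal.ofReal (Real.sqrt (A n v * B n v)) := by
        intro v hv
        rw [hF, Finset.mem_filter] at hv
        have hab : A n v ≤ B n v := by
          rw [hμv, hνv] at hv
          exact (ENNReal.ofReal_le_ofReal_iff (hprodnn _)).mp hv.2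
        rw [hμv]
        apply ENNReal.ofReal_le_ofReal
        calc A n v = Real.sqrt (A n v * A n v) := (Real.sqrt_mul_self (hprodnn _)).symm
          _ ≤ Real.sqrt (A n v * B n v) :=
              Real.sqrt_le_sqrt (mul_le_mul_of_nonneg_left hab (hprodnn _))
      calc ∑ v ∈ F n, μ (cylinder (List.ofFn v))
          ≤ ∑ v ∈ F n, ENNReal.ofReal (Real.sqrt (A n v * B n v)) := Finset.sum_le_sum hterm
        _ ≤ ∑ v : Fin n → X, ENNReal.ofReal (Real.sqrt (A n v * B n v)) :=
            Finset.sum_le_sum_of_subset (Finset.subset_univ _)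
        _ = ENNReal.ofReal (∑ v : Fin n → X, Real.sqrt (A n v * B n v)) :=
            (ENNReal.ofReal_sum_of_nonneg (fun v _ => Real.sqrt_nonneg _)).symm
        _ = ENNReal.ofReal (rr πf lam p n g) := by rw [hH n]
    have hGc : ∀ n : ℕ, (G n)ᶜ = ⋃ v ∈ (Finset.univ.filter
        (fun v : Fin n → X =>
          ¬ (μ (cylinder (List.ofFn v)) ≤ ν (cylinder (List.ofFn v))))),
        cylinder (List.ofFn v) := by
      intro n
      ext ω
      constructor
      · intro hω
        have hωmem := mem_cylinder_restrict (n := n) ω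
        refine Set.mem_iUnion₂.mpr ⟨fun i : Fin n => ω i, ?_, hωmem⟩
        rw [Finset.mem_filter]
        refine ⟨Finset.mem_univ _, fun hcon => ?_⟩
        apply hω
        rw [hG]
        simp only []
        refine Set.mem_iUnion₂.mpr ⟨fun i : Fin n => ω i, ?_, hωmem⟩
        rw [hF, Finset.mem_filter]
        exact ⟨Finset.mem_univ _, hcon⟩
      · intro hω
        obtain ⟨v, hv, hωv⟩ := Set.mem_iUnion₂.mp hω
        rw [Finset.mem_filter] at hv
        intro hcon
        rw [hG] at hcon
        simp only [] at hcon
        obtain ⟨v', hv', hωv'⟩ := Set.mem_iUnion₂.mp hcon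
        rw [hF, Finset.mem_filter] at hv'
        have hvv : v = v' := by
          by_contra hne'
          exact (Set.disjoint_left.mp (cylinder_ofFn_disjoint hne') hωv) hωv'
        exact hv.2 (hvv ▸ hv'.2)
    have hνGc : ∀ n, ν ((G n)ᶜ) ≤ ENNReal.ofReal (rr πf lam p n g) := by
      intro n
      rw [hGc n, measure_biUnion_cylinders]
      have hterm : ∀ v ∈ Finset.univ.filter
          (fun v : Fin n → X =>
            ¬ (μ (cylinder (List.ofFn v)) ≤ ν (cylinder (List.ofFn v)))),
          ν (cylinder (List.ofFn v)) ≤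
            ENNReal.ofReal (Real.sqrt (A n v * B n v)) := by
        intro v hv
        rw [Finset.mem_filter] at hv
        have hba : B n v ≤ A n v := by
          have := le_of_not_ge hv.2
          rw [hμv, hνv] at this
          exact (ENNReal.ofReal_le_ofReal_iff (hprodnn _)).mp this
        rw [hνv]
        apply ENNReal.ofReal_le_ofReal
        calc B n v = Real.sqrt (B n v * B n v) := (Real.sqrt_mul_self (hprodnn _)).symm
          _ ≤ Real.sqrt (A n v * B n v) :=
              Real.sqrt_le_sqrt (mul_le_mul_of_nonneg_right hba (hprodnn _))
      calc ∑ v ∈ _, ν (cylinder (List.ofFn v))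
          ≤ ∑ v ∈ _, ENNReal.ofReal (Real.sqrt (A n v * B n v)) := Finset.sum_le_sum hterm
        _ ≤ ∑ v : Fin n → X, ENNReal.ofReal (Real.sqrt (A n v * B n v)) :=
            Finset.sum_le_sum_of_subset (Finset.subset_univ _)
        _ = ENNReal.ofReal (∑ v : Fin n → X, Real.sqrt (A n v * B n v)) :=
            (ENNReal.ofReal_sum_of_nonneg (fun v _ => Real.sqrt_nonneg _)).symm
        _ = ENNReal.ofReal (rr πf lam p n g) := by rw [hH n]
    set cE := ENNReal.ofReal c with hcE
    have hcE1 : cE < 1 := by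
      rw [hcE]
      exact ENNReal.ofReal_lt_one.mpr hc1
    have hcEtop : cE ≠ ⊤ := ENNReal.ofReal_ne_top
    have hGkμ : ∀ k : ℕ, μ (G (k * N)) ≤ cE ^ k := by
      intro k
      calc μ (G (k * N)) ≤ ENNReal.ofReal (rr πf lam p (k * N) g) := hμG _
        _ ≤ ENNReal.ofReal (c ^ k) := ENNReal.ofReal_le_ofReal (hdecay k g)
        _ = cE ^ k := by rw [hcE, ENNReal.ofReal_pow hc0]
    have hGkν : ∀ k : ℕ, ν ((G (k * N))ᶜ) ≤ cE ^ k := by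
      intro k
      calc ν ((G (k * N))ᶜ) ≤ ENNReal.ofReal (rr πf lam p (k * N) g) := hνGc _
        _ ≤ ENNReal.ofReal (c ^ k) := ENNReal.ofReal_le_ofReal (hdecay k g)
        _ = cE ^ k := by rw [hcE, ENNReal.ofReal_pow hc0]
    set Bs : Set (ℕ → X) := ⋂ m : ℕ, ⋃ k : ℕ, G ((m + k) * N) with hBs
    have hBmeas : MeasurableSet Bs :=
      MeasurableSet.iInter fun m => MeasurableSet.iUnion fun k => hGmeas _
    have hpowtend : Tendsto (fun m : ℕ => cE ^ m) atTop (nhds 0) :=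
      ENNReal.tendsto_pow_atTop_nhds_zero_of_lt_one hcE1
    have hμB : μ Bs = 0 := by
      have hb : ∀ m : ℕ, μ Bs ≤ cE ^ m * (1 - cE)⁻¹ := by
        intro m
        calc μ Bs ≤ μ (⋃ k : ℕ, G ((m + k) * N)) := measure_mono (Set.iInter_subset _ m)
          _ ≤ ∑' k : ℕ, μ (G ((m + k) * N)) := measure_iUnion_le _
          _ ≤ ∑' k : ℕ, cE ^ (m + k) := ENNReal.tsum_le_tsum (fun k => hGkμ (m + k))
          _ = cE ^ m * ∑' k : ℕ, cE ^ k := by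
              simp_rw [pow_add]
              rw [ENNReal.tsum_mul_left]
          _ = cE ^ m * (1 - cE)⁻¹ := by rw [ENNReal.tsum_geometric]
      have h2 : (1 - cE)⁻¹ ≠ ⊤ := by
        rw [ENNReal.inv_ne_top]
        exact (tsub_pos_of_lt hcE1).ne'
      have htend : Tendsto (fun m : ℕ => cE ^ m * (1 - cE)⁻¹) atTop (nhds 0) := by
        simpa using ENNReal.Tendsto.mul_const hpowtend (Or.inr h2)
      exact le_antisymm (ge_of_tendsto' htend hb) (zero_le)
    have hνBc : ν Bsᶜ = 0 := by
      rw [hBs, Set.compl_iInter]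
      refine measure_iUnion_null fun m => ?_
      rw [Set.compl_iUnion]
      have hb : ∀ k : ℕ, ν (⋂ k' : ℕ, (G ((m + k') * N))ᶜ) ≤ cE ^ (m + k) :=
        fun k => le_trans (measure_mono (Set.iInter_subset _ k)) (hGkν (m + k))
      have htend : Tendsto (fun k : ℕ => cE ^ (m + k)) atTop (nhds 0) := by
        have h1 : Tendsto (fun k : ℕ => cE ^ m * cE ^ k) atTop (nhds 0) := by
          simpa using ENNReal.Tendsto.const_mul hpowtend
            (Or.inr (ENNReal.pow_ne_top hcEtop))
        simpa [pow_add] using h1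
      exact le_antisymm (ge_of_tendsto' htend hb) (zero_le)
    exact ⟨Bs, hBmeas, hμB, hνBc⟩
  · -- invariant case
    intro hinvl
    have hmapl : ∀ (s : S) (u : List X), (lamExt πf lam s u).map l = u.map l := by
      intro s u
      induction u generalizing s with
      | nil => rfl
      | cons x u ih => simp [hinvl, ih]
    have key : ∀ (n : ℕ) (v : Fin n → X),
        ν (cylinder (List.ofFn v)) = μ (cylinder (List.ofFn v)) := by
      intro n v
      rw [hν_cyl n v, hμ, hμ]
      have hv : v = (e n) ((e n).symm v) := (Equiv.apply_symm_apply _ _).symm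
      have h2 : (List.ofFn v).map l = (List.ofFn ((e n).symm v)).map l := by
        conv_lhs => rw [hv]
        rw [hee n, hmapl]
      rw [h2]
    have hνuniv : ν Set.univ = μ Set.univ := by
      rw [hν, Measure.map_apply hmeas MeasurableSet.univ]
      simp
    haveI : IsFiniteMeasure ν := ⟨by rw [hνuniv, hμuniv]; exact ENNReal.one_lt_top⟩
    exact measures_eq_of_cylinders x₀ ν μ key hνuniv

end AutoMarkov
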